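/- There exists a unique continuously differentiable function f̄ : [0,T] → ℝ such that for every t ∈ [0,T], f̄(t)·γ₀·H̄₂[f̄](t) = H̄₁[f̄](t) + γ₀·(H̄₁[f̄](t)² − H̄₂[f̄](t)); note that the denominator γ₀·H̄₂[f̄](t) is automatically strictly positive. (Corollary 3: the equation system (45) characterizing the equilibrium investment strategy of the ambiguity-neutral mean-variance investor without skewness preference, i.e. the case ξ = 0 and φ₀ = 0 of Theorem 4.1, recovering Theorem 4.6 of Björk, Murgoci and Zhou.) -/

import Mathlib

open MeasureTheory Set

/-- `H̄₁[f](t) = exp(∫_t^T (r(s) + Θ(s) f(s)) ds)`. -/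
noncomputable def H1b (T : ℝ) (r Θ f : ℝ → ℝ) (t : ℝ) : ℝ :=
  Real.exp (∫ s in t..T, r s + Θ s * f s)

/-- `H̄₂[f](t) = exp(∫_t^T (2r(s) + 2Θ(s)f(s) + Θ(s)f(s)²) ds)`. -/
noncomputable def H2b (T : ℝ) (r Θ f : ℝ → ℝ) (t : ℝ) : ℝ :=
  Real.exp (∫ s in t..T, 2 * r s + 2 * Θ s * f s + Θ s * f s ^ 2)

/-- `f` is a C¹ solution on `[0,T]` of the equation system (45) of the
ambiguity-neutral mean-variance investor without skewness preference. -/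
def SolvesMVNIE (T γ₀ : ℝ) (r Θ f : ℝ → ℝ) : Prop :=
  ContDiffOn ℝ 1 f (Set.Icc 0 T) ∧
    ∀ t ∈ Set.Icc 0 T,
      f t * (γ₀ * H2b T r Θ f t) =
        H1b T r Θ f t + γ₀ * (H1b T r Θ f t ^ 2 - H2b T r Θ f t)

/-!
With `(a, v) = (∫_t^T (r + Θ f), ∫_t^T Θ f²)` one has `H̄₁[f] = exp a` and `H̄₂[f] = exp (2a + v)`,
so the equation says exactly `f = S(a, v) := γ₀⁻¹ exp (-a - v) + exp (-v) - 1`, and `f` solves it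
iff `(a, v)` solves the backward ODE `(a, v)' = -(r + Θ S, Θ S²)`, `(a, v)(T) = 0`.
Since `S > -1` and `Θ ≥ 0`, along a solution `a ≥ -2CT` and `v ≥ 0` (`C` bounding `|r|` and `Θ`),
which bounds `S` and then `(a, v)` from above: solutions stay in a compact box. Clamping the state
to that box makes the smooth field globally Lipschitz without changing the solutions, so
Picard–Lindelöf gives a solution and Grönwall's uniqueness theorem shows that it is the only one.
-/

open Real
open scoped NNReal

section Calculus

variable {E : Type*} [NormedAddCommGroup E] [NormedSpace ℝ E] {a b : ℝ}

theorem hasDerivWithinAt_integral_Icc_left [CompleteSpace E] {φ : ℝ → E} {t : ℝ}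
    (hφ : ContinuousOn φ (Icc a b)) (ht : t ∈ Icc a b) :
    HasDerivWithinAt (fun u => ∫ s in u..b, φ s) (-φ t) (Icc a b) t := by
  have : Fact (t ∈ Icc a b) := ⟨ht⟩
  exact intervalIntegral.integral_hasDerivWithinAt_left
    ((hφ.mono (Icc_subset_Icc ht.1 le_rfl)).intervalIntegrable_of_Icc ht.2)
    (hφ.stronglyMeasurableAtFilter_nhdsWithin measurableSet_Icc t) (hφ t ht)

theorem contDiffOn_one_Icc_of_hasDerivWithinAt {φ φ' : ℝ → E} (hab : a < b)
    (hφ : ∀ t ∈ Icc a b, HasDerivWithinAt φ (φ' t) (Icc a b) t)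
    (hφ' : ContinuousOn φ' (Icc a b)) : ContDiffOn ℝ 1 φ (Icc a b) := by
  have hu : UniqueDiffOn ℝ (Icc a b) := uniqueDiffOn_Icc hab
  rw [show (1 : WithTop ℕ∞) = 0 + 1 from rfl, contDiffOn_succ_iff_derivWithin hu]
  refine ⟨fun t ht => (hφ t ht).differentiableWithinAt, by simp, ?_⟩
  exact contDiffOn_zero.2 (hφ'.congr fun t ht => (hφ t ht).derivWithin (hu t ht))

theorem eqOn_Icc_of_hasDerivWithinAt_of_eq_right {φ ψ φ' : ℝ → E}
    (hφ : ∀ t ∈ Icc a b, HasDerivWithinAt φ (φ' t) (Icc a b) t)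
    (hψ : ∀ t ∈ Icc a b, HasDerivWithinAt ψ (φ' t) (Icc a b) t) (hb : φ b = ψ b) :
    EqOn φ ψ (Icc a b) := by
  intro t ht
  have hconst := constant_of_has_deriv_right_zero (f := φ - ψ)
    (fun s hs => ((hφ s hs).sub (hψ s hs)).continuousWithinAt)
    (fun s hs => by
      simpa using ((hφ s (Ico_subset_Icc_self hs)).sub (hψ s (Ico_subset_Icc_self hs))
        ).mono_of_mem_nhdsWithin (Icc_mem_nhdsGE_of_mem hs))
  have hab : a ≤ b := ht.1.trans ht.2
  have h1 := hconst t ht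
  have h2 := hconst b ⟨hab, le_rfl⟩
  simp only [Pi.sub_apply, hb, sub_self] at h1 h2
  exact sub_eq_zero.1 (h1.trans h2.symm)

theorem intervalIntegral.mul_le_integral_of_forall_le {φ : ℝ → ℝ} {m : ℝ} (hab : a ≤ b)
    (hφ : IntervalIntegrable φ volume a b) (h : ∀ s ∈ Icc a b, m ≤ φ s) :
    (b - a) * m ≤ ∫ s in a..b, φ s := by
  simpa using intervalIntegral.integral_mono_on hab intervalIntegrable_const hφ h

theorem intervalIntegral.integral_le_mul_of_forall_le {φ : ℝ → ℝ} {m : ℝ} (hab : a ≤ b)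
    (hφ : IntervalIntegrable φ volume a b) (h : ∀ s ∈ Icc a b, φ s ≤ m) :
    ∫ s in a..b, φ s ≤ (b - a) * m := by
  simpa using intervalIntegral.integral_mono_on hab hφ intervalIntegrable_const h

theorem exists_hasDerivWithinAt_Icc_of_lipschitzWith [CompleteSpace E] {v : ℝ → E → E}
    {K L : ℝ≥0} (t₀ : Icc a b) (x₀ : E) (hK : ∀ t ∈ Icc a b, LipschitzWith K (v t))
    (hcont : ∀ x, ContinuousOn (v · x) (Icc a b)) (hL : ∀ t ∈ Icc a b, ∀ x, ‖v t x‖ ≤ L) :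
    ∃ w : ℝ → E, w t₀ = x₀ ∧ ∀ t ∈ Icc a b, HasDerivWithinAt w (v t (w t)) (Icc a b) t := by
  have hab : 0 ≤ b - a := sub_nonneg.2 (t₀.2.1.trans t₀.2.2)
  have hpl : IsPicardLindelof v t₀ x₀ (L * ⟨b - a, hab⟩) 0 L K :=
    { lipschitzOnWith := fun t ht => (hK t ht).lipschitzOnWith
      continuousOn := fun x _ => hcont x
      norm_le := fun t ht x _ => hL t ht x
      mul_max_le := by
        show (L : ℝ) * _ ≤ L * (b - a) - 0
        rw [sub_zero]
        gcongr
        exact max_le (by linarith [t₀.2.1]) (by linarith [t₀.2.2]) }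
  exact hpl.exists_eq_forall_mem_Icc_hasDerivWithinAt₀

end Calculus

theorem ContinuousOn.intervalIntegrable_of_mem_Icc {E : Type*} [NormedAddCommGroup E]
    {φ : ℝ → E} {a b t : ℝ} (hφ : ContinuousOn φ (Icc a b)) (ht : t ∈ Icc a b) :
    IntervalIntegrable φ volume t b :=
  (hφ.mono (Icc_subset_Icc ht.1 le_rfl)).intervalIntegrable_of_Icc ht.2

theorem LocallyLipschitz.exists_lipschitzWith_comp_of_isCompact {α β γ δ : Type*}
    [PseudoMetricSpace α] [PseudoMetricSpace β] [PseudoMetricSpace γ] [PseudoMetricSpace δ]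
    {Φ : α × β → γ} (hΦ : LocallyLipschitz Φ) {P : Set α} {S : Set β} (hP : IsCompact P)
    (hS : IsCompact S) {c : δ → β} (hc : LipschitzWith 1 c) (hcS : ∀ x, c x ∈ S) :
    ∃ K, ∀ p ∈ P, LipschitzWith K fun x => Φ (p, c x) := by
  obtain ⟨K, hK⟩ := (hΦ.locallyLipschitzOn (s := P ×ˢ S)).exists_lipschitzOnWith_of_compact
    (hP.prod hS)
  refine ⟨K, fun p hp => ?_⟩
  have hpc : LipschitzWith 1 fun x => (p, c x) := by
    simpa using (LipschitzWith.const p).prodMk hc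
  have := hK.comp (hpc.lipschitzOnWith (s := univ)) (fun x _ => ⟨hp, hcS x⟩)
  rwa [mul_one, lipschitzOnWith_univ] at this

namespace MeanVariance

noncomputable def strategy (γ₀ : ℝ) (w : ℝ × ℝ) : ℝ :=
  γ₀⁻¹ * exp (-w.1 - w.2) + exp (-w.2) - 1

noncomputable def exponents (T : ℝ) (r Θ h : ℝ → ℝ) (t : ℝ) : ℝ × ℝ :=
  (∫ s in t..T, r s + Θ s * h s, ∫ s in t..T, Θ s * h s ^ 2)

/-- The coefficients `(r t, Θ t)` are an argument, so one smooth map serves at all times and is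
Lipschitz on compact sets uniformly in `t`. -/
noncomputable def vectorField (γ₀ : ℝ) (q : (ℝ × ℝ) × (ℝ × ℝ)) : ℝ × ℝ :=
  (-(q.1.1 + q.1.2 * strategy γ₀ q.2), -(q.1.2 * strategy γ₀ q.2 ^ 2))

theorem contDiff_strategy (γ₀ : ℝ) : ContDiff ℝ 1 (strategy γ₀) := by
  unfold strategy; fun_prop

theorem contDiff_vectorField (γ₀ : ℝ) : ContDiff ℝ 1 (vectorField γ₀) := by
  unfold vectorField strategy; fun_prop

theorem neg_one_lt_strategy {γ₀ : ℝ} (hγ : 0 < γ₀) (w : ℝ × ℝ) : -1 < strategy γ₀ w := by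
  have := mul_pos (inv_pos.2 hγ) (exp_pos (-w.1 - w.2))
  have := exp_pos (-w.2)
  unfold strategy; linarith

theorem eq_strategy_iff {γ₀ : ℝ} (hγ : γ₀ ≠ 0) (x a v : ℝ) :
    x * (γ₀ * exp (2 * a + v)) = exp a + γ₀ * (exp a ^ 2 - exp (2 * a + v)) ↔
      x = strategy γ₀ (a, v) := by
  rw [← eq_div_iff (mul_ne_zero hγ (exp_ne_zero _))]
  suffices h : (exp a + γ₀ * (exp a ^ 2 - exp (2 * a + v))) / (γ₀ * exp (2 * a + v)) =
      strategy γ₀ (a, v) by rw [h]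
  have e1 : exp (2 * a + v) = exp a * exp a * exp v := by rw [← exp_add, ← exp_add]; ring_nf
  have e2 : exp (-a - v) = (exp a * exp v)⁻¹ := by rw [← exp_add, ← exp_neg]; ring_nf
  simp only [strategy, e1, e2, exp_neg]
  field_simp
  ring

section Equation

variable {T : ℝ} {r Θ h : ℝ → ℝ}

theorem H2b_eq_exp_exponents {t : ℝ}
    (h₁ : IntervalIntegrable (fun s => r s + Θ s * h s) volume t T)
    (h₂ : IntervalIntegrable (fun s => Θ s * h s ^ 2) volume t T) :
    H2b T r Θ h t = exp (2 * (exponents T r Θ h t).1 + (exponents T r Θ h t).2) := by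
  rw [H2b, exponents, ← intervalIntegral.integral_const_mul,
    ← intervalIntegral.integral_add (h₁.const_mul 2) h₂]
  congr 1
  exact intervalIntegral.integral_congr fun s _ => by ring

theorem equation_iff {γ₀ : ℝ} (hγ : γ₀ ≠ 0) (hr : ContinuousOn r (Icc 0 T))
    (hΘ : ContinuousOn Θ (Icc 0 T)) (hh : ContinuousOn h (Icc 0 T)) {t : ℝ} (ht : t ∈ Icc 0 T) :
    h t * (γ₀ * H2b T r Θ h t) = H1b T r Θ h t + γ₀ * (H1b T r Θ h t ^ 2 - H2b T r Θ h t) ↔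
      h t = strategy γ₀ (exponents T r Θ h t) := by
  rw [H2b_eq_exp_exponents ((hr.add (hΘ.mul hh)).intervalIntegrable_of_mem_Icc ht)
    ((hΘ.mul (hh.pow 2)).intervalIntegrable_of_mem_Icc ht)]
  exact eq_strategy_iff hγ _ _ _

theorem hasDerivWithinAt_exponents (hr : ContinuousOn r (Icc 0 T))
    (hΘ : ContinuousOn Θ (Icc 0 T)) (hh : ContinuousOn h (Icc 0 T)) {t : ℝ} (ht : t ∈ Icc 0 T) :
    HasDerivWithinAt (exponents T r Θ h) (-(r t + Θ t * h t), -(Θ t * h t ^ 2)) (Icc 0 T) t :=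
  (hasDerivWithinAt_integral_Icc_left (hr.add (hΘ.mul hh)) ht).prodMk
    (hasDerivWithinAt_integral_Icc_left (hΘ.mul (hh.pow 2)) ht)

end Equation

def exponentsLo (c : ℝ) : ℝ × ℝ := (-c, 0)

noncomputable def strategyBound (γ₀ c : ℝ) : ℝ := 1 + γ₀⁻¹ * exp c

theorem one_le_strategyBound {γ₀ : ℝ} (hγ : 0 < γ₀) (c : ℝ) : 1 ≤ strategyBound γ₀ c := by
  unfold strategyBound; have := exp_pos c; have := inv_pos.2 hγ; nlinarith

theorem strategy_le_strategyBound {γ₀ c : ℝ} (hγ : 0 < γ₀) {w : ℝ × ℝ}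
    (hw : exponentsLo c ≤ w) : strategy γ₀ w ≤ strategyBound γ₀ c := by
  obtain ⟨hw₁, hw₂⟩ : -c ≤ w.1 ∧ 0 ≤ w.2 := hw
  have h₁ : exp (-w.1 - w.2) ≤ exp c := exp_le_exp.2 (by linarith)
  have h₂ : exp (-w.2) ≤ 1 := exp_le_one_iff.2 (by linarith)
  have := mul_le_mul_of_nonneg_left h₁ (inv_pos.2 hγ).le
  unfold strategy strategyBound; linarith

noncomputable def exponentsHi (γ₀ c : ℝ) : ℝ × ℝ :=
  (c * strategyBound γ₀ c, c * strategyBound γ₀ c ^ 2)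

theorem exponentsLo_le_exponentsHi {γ₀ c : ℝ} (hγ : 0 < γ₀) (hc : 0 ≤ c) :
    exponentsLo c ≤ exponentsHi γ₀ c := by
  have := one_le_strategyBound hγ c
  exact ⟨by dsimp [exponentsLo, exponentsHi]; nlinarith,
    by dsimp [exponentsLo, exponentsHi]; positivity⟩

section Bounds

variable {T γ₀ C : ℝ} {r Θ h : ℝ → ℝ}

theorem exponentsLo_le_exponents (hr : ContinuousOn r (Icc 0 T)) (hΘ : ContinuousOn Θ (Icc 0 T))
    (hrC : ∀ s ∈ Icc 0 T, |r s| ≤ C) (hΘC : ∀ s ∈ Icc 0 T, Θ s ≤ C)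
    (hΘ₀ : ∀ s ∈ Icc 0 T, 0 ≤ Θ s) (hh : ContinuousOn h (Icc 0 T))
    (h_ge : ∀ s ∈ Icc 0 T, -1 ≤ h s) {t : ℝ} (ht : t ∈ Icc 0 T) :
    exponentsLo (2 * C * T) ≤ exponents T r Θ h t := by
  have hC : 0 ≤ C := (abs_nonneg _).trans (hrC t ht)
  have hsub : Icc t T ⊆ Icc 0 T := Icc_subset_Icc ht.1 le_rfl
  refine ⟨?_, intervalIntegral.integral_nonneg ht.2 fun s hs =>
    mul_nonneg (hΘ₀ s (hsub hs)) (sq_nonneg _)⟩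
  have hint := intervalIntegral.mul_le_integral_of_forall_le (m := -(2 * C))
    (φ := fun s => r s + Θ s * h s) ht.2
    ((hr.add (hΘ.mul hh)).intervalIntegrable_of_mem_Icc ht) fun s hs => by
      have := (abs_le.1 (hrC s (hsub hs))).1
      nlinarith [mul_le_mul_of_nonneg_left (h_ge s (hsub hs)) (hΘ₀ s (hsub hs)), hΘC s (hsub hs)]
  exact le_trans (by dsimp only [exponentsLo]; nlinarith [ht.1]) hint

theorem exponents_le_of_le {M : ℝ} (hM : 1 ≤ M) (hr : ContinuousOn r (Icc 0 T))
    (hΘ : ContinuousOn Θ (Icc 0 T)) (hrC : ∀ s ∈ Icc 0 T, |r s| ≤ C)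
    (hΘC : ∀ s ∈ Icc 0 T, Θ s ≤ C) (hΘ₀ : ∀ s ∈ Icc 0 T, 0 ≤ Θ s)
    (hh : ContinuousOn h (Icc 0 T)) (h_ge : ∀ s ∈ Icc 0 T, -1 ≤ h s)
    (h_le : ∀ s ∈ Icc 0 T, h s ≤ M) {t : ℝ} (ht : t ∈ Icc 0 T) :
    exponents T r Θ h t ≤ (2 * C * T * M, 2 * C * T * M ^ 2) := by
  have hC : 0 ≤ C := (abs_nonneg _).trans (hrC t ht)
  have hsub : Icc t T ⊆ Icc 0 T := Icc_subset_Icc ht.1 le_rfl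
  have hint₁ := intervalIntegral.integral_le_mul_of_forall_le (m := 2 * C * M)
    (φ := fun s => r s + Θ s * h s) ht.2
    ((hr.add (hΘ.mul hh)).intervalIntegrable_of_mem_Icc ht) fun s hs => by
      have := (abs_le.1 (hrC s (hsub hs))).2
      nlinarith [mul_le_mul_of_nonneg_left (h_le s (hsub hs)) (hΘ₀ s (hsub hs)),
        mul_le_mul_of_nonneg_right (hΘC s (hsub hs)) (by linarith : (0:ℝ) ≤ M)]
  have hint₂ := intervalIntegral.integral_le_mul_of_forall_le (m := 2 * C * M ^ 2)
    (φ := fun s => Θ s * h s ^ 2) ht.2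
    ((hΘ.mul (hh.pow 2)).intervalIntegrable_of_mem_Icc ht) fun s hs => by
      have hsq : h s ^ 2 ≤ M ^ 2 := sq_le_sq' (by linarith [h_ge s (hsub hs)]) (h_le s (hsub hs))
      nlinarith [mul_le_mul (hΘC s (hsub hs)) hsq (sq_nonneg _) hC, sq_nonneg M]
  have hCM : 0 ≤ 2 * C * M := by positivity
  exact ⟨hint₁.trans (by nlinarith [mul_nonneg ht.1 hCM]),
    hint₂.trans (by nlinarith [mul_nonneg ht.1 (mul_nonneg hCM (by positivity : (0:ℝ) ≤ M))])⟩

theorem exponents_mem_Icc (hγ : 0 < γ₀) (hr : ContinuousOn r (Icc 0 T))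
    (hΘ : ContinuousOn Θ (Icc 0 T)) (hrC : ∀ s ∈ Icc 0 T, |r s| ≤ C)
    (hΘC : ∀ s ∈ Icc 0 T, Θ s ≤ C) (hΘ₀ : ∀ s ∈ Icc 0 T, 0 ≤ Θ s)
    (hh : ContinuousOn h (Icc 0 T)) (h_ge : ∀ s ∈ Icc 0 T, -1 ≤ h s)
    (h_le : ∀ s ∈ Icc 0 T, h s ≤ strategyBound γ₀ (2 * C * T)) {t : ℝ} (ht : t ∈ Icc 0 T) :
    exponents T r Θ h t ∈ Icc (exponentsLo (2 * C * T)) (exponentsHi γ₀ (2 * C * T)) := by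
  refine ⟨exponentsLo_le_exponents hr hΘ hrC hΘC hΘ₀ hh h_ge ht, ?_⟩
  simpa only [exponentsHi, mul_assoc] using
    exponents_le_of_le (one_le_strategyBound hγ _) hr hΘ hrC hΘC hΘ₀ hh h_ge h_le ht

theorem exponents_mem_Icc_of_eq_strategy (hγ : 0 < γ₀) (hr : ContinuousOn r (Icc 0 T))
    (hΘ : ContinuousOn Θ (Icc 0 T)) (hrC : ∀ s ∈ Icc 0 T, |r s| ≤ C)
    (hΘC : ∀ s ∈ Icc 0 T, Θ s ≤ C) (hΘ₀ : ∀ s ∈ Icc 0 T, 0 ≤ Θ s)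
    (hh : ContinuousOn h (Icc 0 T))
    (hfix : ∀ s ∈ Icc 0 T, h s = strategy γ₀ (exponents T r Θ h s)) {t : ℝ}
    (ht : t ∈ Icc 0 T) :
    exponents T r Θ h t ∈ Icc (exponentsLo (2 * C * T)) (exponentsHi γ₀ (2 * C * T)) := by
  have h_ge : ∀ s ∈ Icc 0 T, -1 ≤ h s := fun s hs =>
    (hfix s hs).symm ▸ (neg_one_lt_strategy hγ _).le
  refine exponents_mem_Icc hγ hr hΘ hrC hΘC hΘ₀ hh h_ge (fun s hs => ?_) ht
  rw [hfix s hs]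
  exact strategy_le_strategyBound hγ (exponentsLo_le_exponents hr hΘ hrC hΘC hΘ₀ hh h_ge hs)

end Bounds

def clampBox (lo hi w : ℝ × ℝ) : ℝ × ℝ := (max lo.1 (min hi.1 w.1), max lo.2 (min hi.2 w.2))

theorem clampBox_mem {lo hi : ℝ × ℝ} (h : lo ≤ hi) (w : ℝ × ℝ) : clampBox lo hi w ∈ Icc lo hi :=
  ⟨⟨le_max_left _ _, le_max_left _ _⟩,
    ⟨max_le h.1 (min_le_left _ _), max_le h.2 (min_le_left _ _)⟩⟩

theorem clampBox_of_mem {lo hi w : ℝ × ℝ} (hw : w ∈ Icc lo hi) : clampBox lo hi w = w := by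
  simp [clampBox, hw.1.1, hw.1.2, hw.2.1, hw.2.2]

theorem lipschitzWith_clampBox (lo hi : ℝ × ℝ) : LipschitzWith 1 (clampBox lo hi) := by
  have h := ((LipschitzWith.prod_fst.const_min hi.1).const_max lo.1).prodMk
    ((LipschitzWith.prod_snd.const_min hi.2).const_max lo.2)
  rwa [max_self] at h

noncomputable def truncatedField (γ₀ : ℝ) (lo hi : ℝ × ℝ) (r Θ : ℝ → ℝ) (t : ℝ)
    (w : ℝ × ℝ) : ℝ × ℝ :=
  vectorField γ₀ ((r t, Θ t), clampBox lo hi w)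

section Truncation

variable {γ₀ a b : ℝ} {lo hi : ℝ × ℝ} {r Θ : ℝ → ℝ}

theorem exists_lipschitzWith_truncatedField (hlo : lo ≤ hi) (hr : ContinuousOn r (Icc a b))
    (hΘ : ContinuousOn Θ (Icc a b)) :
    ∃ K, ∀ t ∈ Icc a b, LipschitzWith K (truncatedField γ₀ lo hi r Θ t) := by
  obtain ⟨K, hK⟩ :=
    (contDiff_vectorField γ₀).locallyLipschitz.exists_lipschitzWith_comp_of_isCompact
      (isCompact_Icc.image_of_continuousOn (hr.prodMk hΘ)) isCompact_Icc
      (lipschitzWith_clampBox lo hi) (clampBox_mem hlo)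
  exact ⟨K, fun t ht => hK _ (mem_image_of_mem _ ht)⟩

theorem exists_bound_truncatedField (hlo : lo ≤ hi) (hr : ContinuousOn r (Icc a b))
    (hΘ : ContinuousOn Θ (Icc a b)) :
    ∃ L, ∀ t ∈ Icc a b, ∀ w, ‖truncatedField γ₀ lo hi r Θ t w‖ ≤ L := by
  obtain ⟨L, hL⟩ := ((isCompact_Icc.image_of_continuousOn (hr.prodMk hΘ)).prod
    isCompact_Icc).exists_bound_of_continuousOn (contDiff_vectorField γ₀).continuous.continuousOn
  exact ⟨L, fun t ht w => hL _ ⟨mem_image_of_mem _ ht, clampBox_mem hlo w⟩⟩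

theorem exists_hasDerivWithinAt_truncatedField (hab : a ≤ b) (hlo : lo ≤ hi)
    (hr : ContinuousOn r (Icc a b)) (hΘ : ContinuousOn Θ (Icc a b)) :
    ∃ w : ℝ → ℝ × ℝ, w b = 0 ∧
      ∀ t ∈ Icc a b, HasDerivWithinAt w (truncatedField γ₀ lo hi r Θ t (w t)) (Icc a b) t := by
  obtain ⟨K, hK⟩ := exists_lipschitzWith_truncatedField (γ₀ := γ₀) hlo hr hΘ
  obtain ⟨L, hL⟩ := exists_bound_truncatedField (γ₀ := γ₀) hlo hr hΘ
  refine exists_hasDerivWithinAt_Icc_of_lipschitzWith (L := L.toNNReal) ⟨b, hab, le_rfl⟩ 0 hK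
    (fun w => (contDiff_vectorField γ₀).continuous.comp_continuousOn
      ((hr.prodMk hΘ).prodMk continuousOn_const)) ?_
  exact fun t ht w => (hL t ht w).trans (le_coe_toNNReal L)

end Truncation

section FixedPoint

variable {T γ₀ : ℝ} {r Θ h : ℝ → ℝ}

theorem hasDerivWithinAt_exponents_truncatedField {lo hi : ℝ × ℝ}
    (hr : ContinuousOn r (Icc 0 T)) (hΘ : ContinuousOn Θ (Icc 0 T))
    (hh : ContinuousOn h (Icc 0 T))
    (hfix : ∀ s ∈ Icc 0 T, h s = strategy γ₀ (exponents T r Θ h s))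
    (hbox : ∀ s ∈ Icc 0 T, exponents T r Θ h s ∈ Icc lo hi) {t : ℝ} (ht : t ∈ Icc 0 T) :
    HasDerivWithinAt (exponents T r Θ h)
      (truncatedField γ₀ lo hi r Θ t (exponents T r Θ h t)) (Icc 0 T) t := by
  rw [truncatedField, clampBox_of_mem (hbox t ht)]
  have := hasDerivWithinAt_exponents hr hΘ hh ht
  rwa [hfix t ht] at this

theorem contDiffOn_of_eq_strategy (hT : 0 < T) (hr : ContinuousOn r (Icc 0 T))
    (hΘ : ContinuousOn Θ (Icc 0 T)) (hh : ContinuousOn h (Icc 0 T))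
    (hfix : ∀ s ∈ Icc 0 T, h s = strategy γ₀ (exponents T r Θ h s)) :
    ContDiffOn ℝ 1 h (Icc 0 T) := by
  have hW : ContDiffOn ℝ 1 (exponents T r Θ h) (Icc 0 T) :=
    contDiffOn_one_Icc_of_hasDerivWithinAt hT (fun t ht => hasDerivWithinAt_exponents hr hΘ hh ht)
      ((hr.add (hΘ.mul hh)).neg.prodMk (hΘ.mul (hh.pow 2)).neg)
  exact ((contDiff_strategy γ₀).comp_contDiffOn hW).congr hfix

theorem exists_bound_of_continuousOn (hr : ContinuousOn r (Icc 0 T))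
    (hΘ : ContinuousOn Θ (Icc 0 T)) :
    ∃ C, (∀ s ∈ Icc 0 T, |r s| ≤ C) ∧ ∀ s ∈ Icc 0 T, Θ s ≤ C := by
  obtain ⟨C, hC⟩ := isCompact_Icc.exists_bound_of_continuousOn (hr.prodMk hΘ)
  exact ⟨C, fun s hs => (norm_fst_le _).trans (hC s hs),
    fun s hs => (le_abs_self _).trans ((norm_snd_le _).trans (hC s hs))⟩

theorem exists_eq_strategy (hT : 0 < T) (hγ : 0 < γ₀) (hr : ContinuousOn r (Icc 0 T))
    (hΘ : ContinuousOn Θ (Icc 0 T)) (hΘ₀ : ∀ s ∈ Icc 0 T, 0 ≤ Θ s) :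
    ∃ f : ℝ → ℝ, ContinuousOn f (Icc 0 T) ∧
      ∀ t ∈ Icc 0 T, f t = strategy γ₀ (exponents T r Θ f t) := by
  obtain ⟨C, hrC, hΘC⟩ := exists_bound_of_continuousOn hr hΘ
  set lo := exponentsLo (2 * C * T)
  set hi := exponentsHi γ₀ (2 * C * T)
  have hC : 0 ≤ C := (abs_nonneg _).trans (hrC 0 ⟨le_rfl, hT.le⟩)
  have hlo : lo ≤ hi := exponentsLo_le_exponentsHi hγ (by positivity)
  obtain ⟨w, hwT, hw⟩ := exists_hasDerivWithinAt_truncatedField (γ₀ := γ₀) hT.le hlo hr hΘ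
  set f := fun t => strategy γ₀ (clampBox lo hi (w t))
  have hf : ContinuousOn f (Icc 0 T) :=
    (contDiff_strategy γ₀).continuous.comp_continuousOn
      ((lipschitzWith_clampBox lo hi).continuous.comp_continuousOn
        fun t ht => (hw t ht).continuousWithinAt)
  have hwf : EqOn w (exponents T r Θ f) (Icc 0 T) :=
    eqOn_Icc_of_hasDerivWithinAt_of_eq_right hw
      (fun t ht => hasDerivWithinAt_exponents hr hΘ hf ht)
      (by simp [hwT, exponents, Prod.mk_zero_zero])
  have hbox : ∀ t ∈ Icc 0 T, exponents T r Θ f t ∈ Icc lo hi :=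
    fun t ht => exponents_mem_Icc hγ hr hΘ hrC hΘC hΘ₀ hf
      (fun s _ => (neg_one_lt_strategy hγ _).le)
      (fun s _ => strategy_le_strategyBound hγ (clampBox_mem hlo _).1) ht
  refine ⟨f, hf, fun t ht => ?_⟩
  simp only [f]
  rw [hwf ht, clampBox_of_mem (hbox t ht)]

theorem eqOn_of_eq_strategy (hT : 0 ≤ T) (hγ : 0 < γ₀) (hr : ContinuousOn r (Icc 0 T))
    (hΘ : ContinuousOn Θ (Icc 0 T)) (hΘ₀ : ∀ s ∈ Icc 0 T, 0 ≤ Θ s) {f g : ℝ → ℝ}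
    (hf : ContinuousOn f (Icc 0 T))
    (hf_fix : ∀ t ∈ Icc 0 T, f t = strategy γ₀ (exponents T r Θ f t))
    (hg : ContinuousOn g (Icc 0 T))
    (hg_fix : ∀ t ∈ Icc 0 T, g t = strategy γ₀ (exponents T r Θ g t)) :
    EqOn f g (Icc 0 T) := by
  obtain ⟨C, hrC, hΘC⟩ := exists_bound_of_continuousOn hr hΘ
  have hC : 0 ≤ C := (abs_nonneg _).trans (hrC 0 ⟨le_rfl, hT⟩)
  obtain ⟨K, hK⟩ := exists_lipschitzWith_truncatedField (γ₀ := γ₀)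
    (exponentsLo_le_exponentsHi hγ (by positivity : 0 ≤ 2 * C * T)) hr hΘ
  have hderiv : ∀ h : ℝ → ℝ, ContinuousOn h (Icc 0 T) →
      (∀ t ∈ Icc 0 T, h t = strategy γ₀ (exponents T r Θ h t)) → ∀ t ∈ Ioc 0 T,
      HasDerivWithinAt (exponents T r Θ h)
        (truncatedField γ₀ _ _ r Θ t (exponents T r Θ h t)) (Iic t) t :=
    fun h hh hfix t ht => (hasDerivWithinAt_exponents_truncatedField hr hΘ hh hfix
      (fun s hs => exponents_mem_Icc_of_eq_strategy hγ hr hΘ hrC hΘC hΘ₀ hh hfix hs)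
      (Ioc_subset_Icc_self ht)).mono_of_mem_nhdsWithin (Icc_mem_nhdsLE_of_mem ht)
  have hW : EqOn (exponents T r Θ f) (exponents T r Θ g) (Icc 0 T) :=
    ODE_solution_unique_of_mem_Icc_left (s := fun _ => univ)
      (fun t ht => (hK t (Ioc_subset_Icc_self ht)).lipschitzOnWith)
      (fun t ht => (hasDerivWithinAt_exponents hr hΘ hf ht).continuousWithinAt)
      (hderiv f hf hf_fix) (fun _ _ => mem_univ _)
      (fun t ht => (hasDerivWithinAt_exponents hr hΘ hg ht).continuousWithinAt)
      (hderiv g hg hg_fix) (fun _ _ => mem_univ _) (by simp [exponents])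
  intro t ht
  rw [hf_fix t ht, hg_fix t ht, hW ht]

theorem solvesMVNIE_iff (hT : 0 < T) (hγ : γ₀ ≠ 0) (hr : ContinuousOn r (Icc 0 T))
    (hΘ : ContinuousOn Θ (Icc 0 T)) :
    SolvesMVNIE T γ₀ r Θ h ↔
      ContinuousOn h (Icc 0 T) ∧ ∀ t ∈ Icc 0 T, h t = strategy γ₀ (exponents T r Θ h t) := by
  constructor
  · rintro ⟨hC1, hsol⟩
    exact ⟨hC1.continuousOn, fun t ht => (equation_iff hγ hr hΘ hC1.continuousOn ht).1 (hsol t ht)⟩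
  · rintro ⟨hh, hfix⟩
    exact ⟨contDiffOn_of_eq_strategy hT hr hΘ hh hfix,
      fun t ht => (equation_iff hγ hr hΘ hh ht).2 (hfix t ht)⟩

end FixedPoint

end MeanVariance

theorem mean_variance_neutral_equation_unique_solution_general
    (T γ₀ : ℝ) (hT : 0 < T) (hγ : 0 < γ₀)
    (r Θ : ℝ → ℝ)
    (hrLip : ∃ K : NNReal, LipschitzOnWith K r (Set.Icc 0 T))
    (hΘLip : ∃ K : NNReal, LipschitzOnWith K Θ (Set.Icc 0 T))
    (hΘpos : ∀ t ∈ Set.Icc 0 T, 0 ≤ Θ t) :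
    ∃ f : ℝ → ℝ, SolvesMVNIE T γ₀ r Θ f ∧
      (∀ t ∈ Set.Icc 0 T, 0 < γ₀ * H2b T r Θ f t) ∧
      ∀ g : ℝ → ℝ, SolvesMVNIE T γ₀ r Θ g → Set.EqOn f g (Set.Icc 0 T) := by
  obtain ⟨_, hrLip⟩ := hrLip
  obtain ⟨_, hΘLip⟩ := hΘLip
  have hr := hrLip.continuousOn
  have hΘ := hΘLip.continuousOn
  obtain ⟨f, hf, hf_fix⟩ := MeanVariance.exists_eq_strategy hT hγ hr hΘ hΘpos
  refine ⟨f, (MeanVariance.solvesMVNIE_iff hT hγ.ne' hr hΘ).2 ⟨hf, hf_fix⟩,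
    fun t _ => mul_pos hγ (Real.exp_pos _), fun g hg => ?_⟩
  obtain ⟨hg, hg_fix⟩ := (MeanVariance.solvesMVNIE_iff hT hγ.ne' hr hΘ).1 hg
  exact MeanVariance.eqOn_of_eq_strategy hT.le hγ hr hΘ hΘpos hf hf_fix hg hg_fix

/-- Corollary 3: the equation system (45) characterizing the equilibrium
investment strategy of the ambiguity-neutral mean-variance investor without
skewness preference (the case `ξ = 0` and `φ₀ = 0` of Theorem 4.1, recovering
Theorem 4.6 of Björk, Murgoci and Zhou) admits a unique C¹ solution on
`[0,T]`; moreover the denominator `γ₀ H̄₂[f](t)` is automatically strictly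
positive. -/
theorem mean_variance_neutral_equation_unique_solution
    (T γ₀ : ℝ) (hT : 0 < T) (hγ : 0 < γ₀)
    (r Θ : ℝ → ℝ)
    (hrLip : ∃ K : NNReal, LipschitzOnWith K r (Set.Icc 0 T))
    (hΘLip : ∃ K : NNReal, LipschitzOnWith K Θ (Set.Icc 0 T))
    (hrBdd : ∃ C : ℝ, ∀ t ∈ Set.Icc 0 T, |r t| ≤ C)
    (hΘBdd : ∃ C : ℝ, ∀ t ∈ Set.Icc 0 T, |Θ t| ≤ C)
    (hΘpos : ∀ t ∈ Set.Icc 0 T, 0 ≤ Θ t) :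
    ∃ f : ℝ → ℝ, SolvesMVNIE T γ₀ r Θ f ∧
      (∀ t ∈ Set.Icc 0 T, 0 < γ₀ * H2b T r Θ f t) ∧
      ∀ g : ℝ → ℝ, SolvesMVNIE T γ₀ r Θ g → Set.EqOn f g (Set.Icc 0 T) :=
  mean_variance_neutral_equation_unique_solution_general T γ₀ hT hγ r Θ hrLip hΘLip hΘpos
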